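/- Suppose f:[-1,1]→ℂ satisfies f ∈ AC[-1,1], f' and f'' ∈ AC_loc(-1,1), and (1-x²)f''' ∈ L²(-1,1). Then automatically (1-x²)^{1/2}f'' ∈ L²(-1,1) and f' ∈ L²(-1,1). -/

import Mathlib

/-!
Let `M = ∫ (1 - t²)² ‖f'''‖²` over `(-1, 1)`. Weighted Cauchy–Schwarz on `[0, x]` against the
weight `(1 - t²)⁻²`, whose integral there is at most `(1 - x²)⁻¹` (it is dominated by
`(t / (1 - t²))' = (1 + t²) / (1 - t²)²`), gives
`2 √(1 - x²) ∫₀ˣ ‖f'''‖ ≤ M + 1`, so `√(1 - x²) ‖f''‖` is bounded on `(-1, 1)`. As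
`(1 - t²)^(-1/2) = arcsin'` has bounded integral, `f'` is bounded too. Both functions in the
conclusion are then bounded on an interval of finite length.
-/

open MeasureTheory Set Real
open scoped Interval

lemma one_sub_sq_pos {t : ℝ} (ht : t ∈ Ioo (-1 : ℝ) 1) : 0 < 1 - t ^ 2 := by
  nlinarith [ht.1, ht.2]

lemma uIcc_zero_subset_Ioo {x : ℝ} (hx : x ∈ Ioo (-1 : ℝ) 1) :
    uIcc 0 x ⊆ Ioo (-1 : ℝ) 1 :=
  ordConnected_Ioo.uIcc_subset (by norm_num) hx

lemma locallyIntegrableOn_Ioo_of_intervalIntegrable {E : Type*} [NormedAddCommGroup E]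
    {f : ℝ → E} {a b : ℝ}
    (hf : ∀ x ∈ Ioo a b, ∀ y ∈ Ioo a b, IntervalIntegrable f volume x y) :
    LocallyIntegrableOn f (Ioo a b) := by
  intro x hx
  obtain ⟨a', ha'⟩ := exists_between hx.1
  obtain ⟨b', hb'⟩ := exists_between hx.2
  exact ⟨Ioc a' b', mem_nhdsWithin_of_mem_nhds (Ioc_mem_nhds ha'.2 hb'.1),
    (hf a' ⟨ha'.1, ha'.2.trans hx.2⟩ b' ⟨hx.1.trans hb'.1, hb'.2⟩).1⟩

lemma norm_le_norm_add_setIntegral_uIoc {E : Type*} [NormedAddCommGroup E] [NormedSpace ℝ E]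
    {g h : ℝ → E} {a b : ℝ} (hgh : g b - g a = ∫ t in a..b, h t) :
    ‖g b‖ ≤ ‖g a‖ + ∫ t in Ι a b, ‖h t‖ :=
  calc ‖g b‖ = ‖g a + (g b - g a)‖ := by rw [add_sub_cancel]
    _ ≤ ‖g a‖ + ‖g b - g a‖ := norm_add_le _ _
    _ ≤ ‖g a‖ + ∫ t in Ι a b, ‖h t‖ := by
      rw [hgh]
      gcongr
      exact intervalIntegral.norm_integral_le_integral_norm_uIoc

lemma two_mul_mul_setIntegral_norm_le {α E : Type*} [MeasurableSpace α] [NormedAddCommGroup E]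
    {μ : Measure α} {s : Set α} (hs : MeasurableSet s) {g : α → E} {w : α → ℝ}
    (hw : ∀ x ∈ s, w x ≠ 0) {c : ℝ} (hc : 0 ≤ c)
    (hwg : IntegrableOn (fun x => w x ^ 2 * ‖g x‖ ^ 2) s μ)
    (hw_inv : IntegrableOn (fun x => (w x ^ 2)⁻¹) s μ) :
    2 * c * ∫ x in s, ‖g x‖ ∂μ ≤
      (∫ x in s, w x ^ 2 * ‖g x‖ ^ 2 ∂μ) + c ^ 2 * ∫ x in s, (w x ^ 2)⁻¹ ∂μ := by
  rw [← integral_const_mul, ← integral_const_mul, ← integral_add hwg (hw_inv.const_mul _)]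
  refine integral_mono_of_nonneg (ae_of_all _ fun x => by positivity)
    (hwg.add (hw_inv.const_mul _)) ?_
  filter_upwards [ae_restrict_mem hs] with x hx
  have hwx := hw x hx
  calc 2 * c * ‖g x‖ = 2 * (w x * ‖g x‖) * (c / w x) := by field_simp
    _ ≤ (w x * ‖g x‖) ^ 2 + (c / w x) ^ 2 := two_mul_le_add_sq _ _
    _ = w x ^ 2 * ‖g x‖ ^ 2 + c ^ 2 * (w x ^ 2)⁻¹ := by field_simp

lemma setIntegral_uIoc_eq_abs_sub_of_hasDerivAt {F w : ℝ → ℝ} {a b : ℝ}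
    (hF : ∀ t ∈ uIcc a b, HasDerivAt F (w t) t) (hw : IntervalIntegrable w volume a b)
    (hw_nonneg : ∀ t ∈ Ι a b, 0 ≤ w t) : ∫ t in Ι a b, w t = |F b - F a| := by
  rw [← intervalIntegral.integral_eq_sub_of_hasDerivAt hF hw,
    intervalIntegral.abs_integral_eq_abs_integral_uIoc,
    abs_of_nonneg (setIntegral_nonneg measurableSet_uIoc hw_nonneg)]

lemma intervalIntegrable_inv_one_sub_sq_sq {x : ℝ} (hx : x ∈ Ioo (-1 : ℝ) 1) :
    IntervalIntegrable (fun t => ((1 - t ^ 2) ^ 2)⁻¹) volume 0 x :=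
  ContinuousOn.intervalIntegrable <| ContinuousOn.inv₀ (by fun_prop) fun t ht =>
    (pow_pos (one_sub_sq_pos (uIcc_zero_subset_Ioo hx ht)) 2).ne'

lemma setIntegral_uIoc_inv_one_sub_sq_sq_le {x : ℝ} (hx : x ∈ Ioo (-1 : ℝ) 1) :
    ∫ t in Ι 0 x, ((1 - t ^ 2) ^ 2)⁻¹ ≤ (1 - x ^ 2)⁻¹ := by
  have hsub := uIcc_zero_subset_Ioo hx
  have hv : ContinuousOn (fun t : ℝ => (1 + t ^ 2) / (1 - t ^ 2) ^ 2) (uIcc 0 x) :=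
    ContinuousOn.div (by fun_prop) (by fun_prop) fun t ht =>
      (pow_pos (one_sub_sq_pos (hsub ht)) 2).ne'
  have hF : ∀ t ∈ uIcc 0 x,
      HasDerivAt (fun t => t / (1 - t ^ 2)) ((1 + t ^ 2) / (1 - t ^ 2) ^ 2) t := by
    intro t ht
    refine ((hasDerivAt_id' t).fun_div ((hasDerivAt_pow 2 t).const_sub 1)
      (one_sub_sq_pos (hsub ht)).ne').congr_deriv ?_
    push_cast
    ring
  calc ∫ t in Ι 0 x, ((1 - t ^ 2) ^ 2)⁻¹
      ≤ ∫ t in Ι 0 x, (1 + t ^ 2) / (1 - t ^ 2) ^ 2 := by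
        refine setIntegral_mono_on (intervalIntegrable_inv_one_sub_sq_sq hx).def'
          hv.intervalIntegrable.def' measurableSet_uIoc fun t _ => ?_
        rw [inv_eq_one_div]
        gcongr
        nlinarith
    _ = |x / (1 - x ^ 2) - 0 / (1 - 0 ^ 2)| :=
        setIntegral_uIoc_eq_abs_sub_of_hasDerivAt hF hv.intervalIntegrable fun t _ => by positivity
    _ ≤ (1 - x ^ 2)⁻¹ := by
        rw [zero_div, sub_zero, abs_div, abs_of_pos (one_sub_sq_pos hx), div_eq_mul_inv]
        exact mul_le_of_le_one_left (inv_pos.2 (one_sub_sq_pos hx)).le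
          (abs_le.2 ⟨hx.1.le, hx.2.le⟩)

lemma setIntegral_uIoc_inv_sqrt_one_sub_sq_le {x : ℝ} (hx : x ∈ Ioo (-1 : ℝ) 1) :
    ∫ t in Ι 0 x, (√(1 - t ^ 2))⁻¹ ≤ π / 2 := by
  have hsub := uIcc_zero_subset_Ioo hx
  have hw : ContinuousOn (fun t : ℝ => (√(1 - t ^ 2))⁻¹) (uIcc 0 x) :=
    ContinuousOn.inv₀ (by fun_prop) fun t ht => (sqrt_pos.2 (one_sub_sq_pos (hsub ht))).ne'
  have hF : ∀ t ∈ uIcc 0 x, HasDerivAt arcsin (√(1 - t ^ 2))⁻¹ t := fun t ht => by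
    simpa only [one_div] using hasDerivAt_arcsin (hsub ht).1.ne' (hsub ht).2.ne
  rw [setIntegral_uIoc_eq_abs_sub_of_hasDerivAt hF hw.intervalIntegrable
    fun t _ => by positivity, arcsin_zero, sub_zero]
  exact abs_le.2 ⟨neg_pi_div_two_le_arcsin x, arcsin_le_pi_div_two x⟩

lemma two_mul_sqrt_mul_setIntegral_uIoc_norm_le {E : Type*} [NormedAddCommGroup E] {g : ℝ → E}
    (hg : IntegrableOn (fun t => (1 - t ^ 2) ^ 2 * ‖g t‖ ^ 2) (Ioo (-1 : ℝ) 1))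
    {x : ℝ} (hx : x ∈ Ioo (-1 : ℝ) 1) :
    2 * √(1 - x ^ 2) * ∫ t in Ι 0 x, ‖g t‖ ≤
      (∫ t in Ioo (-1 : ℝ) 1, (1 - t ^ 2) ^ 2 * ‖g t‖ ^ 2) + 1 := by
  have hsub : Ι 0 x ⊆ Ioo (-1 : ℝ) 1 := uIoc_subset_uIcc.trans (uIcc_zero_subset_Ioo hx)
  calc 2 * √(1 - x ^ 2) * ∫ t in Ι 0 x, ‖g t‖
      ≤ (∫ t in Ι 0 x, (1 - t ^ 2) ^ 2 * ‖g t‖ ^ 2) +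
          √(1 - x ^ 2) ^ 2 * ∫ t in Ι 0 x, ((1 - t ^ 2) ^ 2)⁻¹ :=
        two_mul_mul_setIntegral_norm_le measurableSet_uIoc
          (fun t ht => (one_sub_sq_pos (hsub ht)).ne') (sqrt_nonneg _) (hg.mono_set hsub)
          (intervalIntegrable_inv_one_sub_sq_sq hx).def'
    _ ≤ (∫ t in Ioo (-1 : ℝ) 1, (1 - t ^ 2) ^ 2 * ‖g t‖ ^ 2) +
          (1 - x ^ 2) * (1 - x ^ 2)⁻¹ := by
        rw [sq_sqrt (one_sub_sq_pos hx).le]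
        gcongr ?_ + _ * ?_
        · exact setIntegral_mono_set hg (ae_of_all _ fun t => by positivity) hsub.eventuallyLE
        · exact (one_sub_sq_pos hx).le
        · exact setIntegral_uIoc_inv_one_sub_sq_sq_le hx
    _ = (∫ t in Ioo (-1 : ℝ) 1, (1 - t ^ 2) ^ 2 * ‖g t‖ ^ 2) + 1 := by
        rw [mul_inv_cancel₀ (one_sub_sq_pos hx).ne']

lemma sqrt_one_sub_sq_mul_norm_le {E : Type*} [NormedAddCommGroup E] [NormedSpace ℝ E]
    {g g' : ℝ → E}
    (hgg' : ∀ x ∈ Ioo (-1 : ℝ) 1, ∀ y ∈ Ioo (-1 : ℝ) 1, g y - g x = ∫ t in x..y, g' t)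
    (hg' : IntegrableOn (fun t => (1 - t ^ 2) ^ 2 * ‖g' t‖ ^ 2) (Ioo (-1 : ℝ) 1))
    {x : ℝ} (hx : x ∈ Ioo (-1 : ℝ) 1) :
    √(1 - x ^ 2) * ‖g x‖ ≤
      ‖g 0‖ + ((∫ t in Ioo (-1 : ℝ) 1, (1 - t ^ 2) ^ 2 * ‖g' t‖ ^ 2) + 1) / 2 := by
  have hg := norm_le_norm_add_setIntegral_uIoc (hgg' 0 (by norm_num) x hx)
  have hg'_int := two_mul_sqrt_mul_setIntegral_uIoc_norm_le hg' hx
  have hσ : √(1 - x ^ 2) ≤ 1 := sqrt_le_one.2 (by nlinarith)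
  calc √(1 - x ^ 2) * ‖g x‖
      ≤ √(1 - x ^ 2) * ‖g 0‖ + √(1 - x ^ 2) * ∫ t in Ι 0 x, ‖g' t‖ := by
        rw [← mul_add]; gcongr
    _ ≤ ‖g 0‖ + ((∫ t in Ioo (-1 : ℝ) 1, (1 - t ^ 2) ^ 2 * ‖g' t‖ ^ 2) + 1) / 2 := by
        gcongr ?_ + ?_
        · exact mul_le_of_le_one_left (norm_nonneg _) hσ
        · linarith

lemma norm_le_of_sqrt_one_sub_sq_mul_norm_le {E : Type*} [NormedAddCommGroup E]
    [NormedSpace ℝ E] {g g' : ℝ → E} {K : ℝ}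
    (hgg' : ∀ x ∈ Ioo (-1 : ℝ) 1, ∀ y ∈ Ioo (-1 : ℝ) 1, g y - g x = ∫ t in x..y, g' t)
    (hK : ∀ t ∈ Ioo (-1 : ℝ) 1, √(1 - t ^ 2) * ‖g' t‖ ≤ K)
    {x : ℝ} (hx : x ∈ Ioo (-1 : ℝ) 1) :
    ‖g x‖ ≤ ‖g 0‖ + K * (π / 2) := by
  have h0 : (0 : ℝ) ∈ Ioo (-1 : ℝ) 1 := by norm_num
  have hK0 : 0 ≤ K := (by positivity : 0 ≤ √(1 - 0 ^ 2) * ‖g' 0‖).trans (hK 0 h0)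
  have hsub := uIcc_zero_subset_Ioo hx
  have hw : ContinuousOn (fun t : ℝ => K * (√(1 - t ^ 2))⁻¹) (uIcc 0 x) :=
    continuousOn_const.mul <| ContinuousOn.inv₀ (by fun_prop) fun t ht =>
      (sqrt_pos.2 (one_sub_sq_pos (hsub ht))).ne'
  calc ‖g x‖ ≤ ‖g 0‖ + ∫ t in Ι 0 x, ‖g' t‖ :=
        norm_le_norm_add_setIntegral_uIoc (hgg' 0 h0 x hx)
    _ ≤ ‖g 0‖ + ∫ t in Ι 0 x, K * (√(1 - t ^ 2))⁻¹ := by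
        gcongr 1
        refine integral_mono_of_nonneg (ae_of_all _ fun _ => norm_nonneg _)
          hw.intervalIntegrable.def' ?_
        filter_upwards [ae_restrict_mem measurableSet_uIoc] with t ht
        have ht' := hsub (uIoc_subset_uIcc ht)
        rw [← div_eq_mul_inv, le_div_iff₀ (sqrt_pos.2 (one_sub_sq_pos ht')), mul_comm]
        exact hK t ht'
    _ ≤ ‖g 0‖ + K * (π / 2) := by
        rw [integral_const_mul]
        gcongr
        exact setIntegral_uIoc_inv_sqrt_one_sub_sq_le hx

theorem domain_refinement_general
    (f' f'' f''' : ℝ → ℂ)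
    -- f ∈ AC[-1,1] with derivative f'
    (hf'_int : IntervalIntegrable f' volume (-1) 1)
    -- f' ∈ AC_loc(-1,1) with derivative f''
    (hf''_loc : ∀ x ∈ Ioo (-1 : ℝ) 1, ∀ y ∈ Ioo (-1 : ℝ) 1,
      IntervalIntegrable f'' volume x y)
    (hf'_ftc : ∀ x ∈ Ioo (-1 : ℝ) 1, ∀ y ∈ Ioo (-1 : ℝ) 1,
      f' y - f' x = ∫ t in x..y, f'' t)
    -- f'' ∈ AC_loc(-1,1) with derivative f'''
    (hf''_ftc : ∀ x ∈ Ioo (-1 : ℝ) 1, ∀ y ∈ Ioo (-1 : ℝ) 1,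
      f'' y - f'' x = ∫ t in x..y, f''' t)
    -- (1-x²) f''' ∈ L²(-1,1)
    (hf'''_L2 : IntegrableOn (fun x => (1 - x ^ 2) ^ 2 * ‖f''' x‖ ^ 2) (Ioo (-1 : ℝ) 1)) :
    IntegrableOn (fun x => (1 - x ^ 2) * ‖f'' x‖ ^ 2) (Ioo (-1 : ℝ) 1) ∧
    IntegrableOn (fun x => ‖f' x‖ ^ 2) (Ioo (-1 : ℝ) 1) := by
  set K := ‖f'' 0‖ + ((∫ t in Ioo (-1 : ℝ) 1, (1 - t ^ 2) ^ 2 * ‖f''' t‖ ^ 2) + 1) / 2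
  have hf''_bound (x : ℝ) (hx : x ∈ Ioo (-1 : ℝ) 1) : √(1 - x ^ 2) * ‖f'' x‖ ≤ K :=
    sqrt_one_sub_sq_mul_norm_le hf''_ftc hf'''_L2 hx
  have hf'_bound (x : ℝ) (hx : x ∈ Ioo (-1 : ℝ) 1) :
      ‖f' x‖ ≤ ‖f' 0‖ + K * (π / 2) :=
    norm_le_of_sqrt_one_sub_sq_mul_norm_le hf'_ftc hf''_bound hx
  have hf''_meas : AEStronglyMeasurable f'' (volume.restrict (Ioo (-1 : ℝ) 1)) :=
    (locallyIntegrableOn_Ioo_of_intervalIntegrable hf''_loc).aestronglyMeasurable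
  have hf'_meas : AEStronglyMeasurable f' (volume.restrict (Ioo (-1 : ℝ) 1)) :=
    hf'_int.1.aestronglyMeasurable.mono_measure (Measure.restrict_mono Ioo_subset_Ioc_self le_rfl)
  refine ⟨.of_bound measure_Ioo_lt_top (by fun_prop) (K ^ 2) ?_,
    .of_bound measure_Ioo_lt_top (by fun_prop) ((‖f' 0‖ + K * (π / 2)) ^ 2) ?_⟩
  all_goals filter_upwards [ae_restrict_mem measurableSet_Ioo] with x hx
  · rw [norm_of_nonneg (by nlinarith [one_sub_sq_pos hx, norm_nonneg (f'' x)]),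
      ← sq_sqrt (one_sub_sq_pos hx).le, ← mul_pow]
    exact pow_le_pow_left₀ (by positivity) (hf''_bound x hx) 2
  · rw [norm_pow, norm_norm]
    exact pow_le_pow_left₀ (norm_nonneg _) (hf'_bound x hx) 2

/-- If `f ∈ AC[-1,1]` with `f', f'' ∈ AC_loc(-1,1)` (encoded via the derivative
functions `f', f'', f'''` and the FTC representation) and `(1-x²)f''' ∈ L²(-1,1)`,
then automatically `(1-x²)^{1/2} f'' ∈ L²(-1,1)` and `f' ∈ L²(-1,1)`. -/
theorem domain_refinement
    (f f' f'' f''' : ℝ → ℂ)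
    -- f ∈ AC[-1,1] with derivative f'
    (hf_ftc : ∀ x ∈ Icc (-1 : ℝ) 1, ∀ y ∈ Icc (-1 : ℝ) 1, f y - f x = ∫ t in x..y, f' t)
    (hf'_int : IntervalIntegrable f' volume (-1) 1)
    -- f' ∈ AC_loc(-1,1) with derivative f''
    (hf''_loc : ∀ x ∈ Ioo (-1 : ℝ) 1, ∀ y ∈ Ioo (-1 : ℝ) 1,
      IntervalIntegrable f'' volume x y)
    (hf'_ftc : ∀ x ∈ Ioo (-1 : ℝ) 1, ∀ y ∈ Ioo (-1 : ℝ) 1,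
      f' y - f' x = ∫ t in x..y, f'' t)
    -- f'' ∈ AC_loc(-1,1) with derivative f'''
    (hf'''_loc : ∀ x ∈ Ioo (-1 : ℝ) 1, ∀ y ∈ Ioo (-1 : ℝ) 1,
      IntervalIntegrable f''' volume x y)
    (hf''_ftc : ∀ x ∈ Ioo (-1 : ℝ) 1, ∀ y ∈ Ioo (-1 : ℝ) 1,
      f'' y - f'' x = ∫ t in x..y, f''' t)
    -- (1-x²) f''' ∈ L²(-1,1)
    (hf'''_L2 : IntegrableOn (fun x => (1 - x ^ 2) ^ 2 * ‖f''' x‖ ^ 2) (Ioo (-1 : ℝ) 1)) :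
    IntegrableOn (fun x => (1 - x ^ 2) * ‖f'' x‖ ^ 2) (Ioo (-1 : ℝ) 1) ∧
    IntegrableOn (fun x => ‖f' x‖ ^ 2) (Ioo (-1 : ℝ) 1) :=
  domain_refinement_general f' f'' f''' hf'_int hf''_loc hf'_ftc hf''_ftc hf'''_L2
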